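/- Let u, B, ρ be smooth fields on ℝ × ℝ³ with ρ > 0 everywhere. Assume Faraday's equation in the form ∂B/∂t − ∇×(u×B) + u(∇·B) = 0 and the mass continuity equation ∂ρ/∂t + ∇·(ρu) = 0. Then the vector field b = B/ρ is Lie dragged with the flow: ∂b/∂t + (u·∇)b − (b·∇)u = 0 (i.e. ∂b/∂t + [u, b] = 0, where [·,·] is the Lie bracket of vector fields). -/

import Mathlib

noncomputable section

/-- Vectors in ℝ³. -/
abbrev Vec3 : Type := Fin 3 → ℝ

/-- Points of space-time: `(t, x)` with `t : ℝ`, `x : Fin 3 → ℝ`. -/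
abbrev Pt : Type := ℝ × Vec3

/-- Euclidean dot product on ℝ³. -/
def dot3 (a b : Vec3) : ℝ := ∑ i, a i * b i

/-- Cross product on ℝ³. -/
def cross3 (a b : Vec3) : Vec3 :=
  ![a 1 * b 2 - a 2 * b 1, a 2 * b 0 - a 0 * b 2, a 0 * b 1 - a 1 * b 0]

/-- Spatial partial derivative ∂f/∂xᵢ of a scalar field. -/
def pd (i : Fin 3) (f : Pt → ℝ) (p : Pt) : ℝ :=
  fderiv ℝ (fun x => f (p.1, x)) p.2 (Pi.single i 1)

/-- Time derivative ∂f/∂t of a scalar field. -/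
def dt (f : Pt → ℝ) (p : Pt) : ℝ := deriv (fun s => f (s, p.2)) p.1

/-- Time derivative of a vector field, componentwise. -/
def dtVec (F : Pt → Vec3) (p : Pt) : Vec3 := fun i => dt (fun q => F q i) p

/-- Spatial gradient ∇f of a scalar field. -/
def grad3 (f : Pt → ℝ) (p : Pt) : Vec3 := fun i => pd i f p

/-- Spatial divergence ∇·F of a vector field. -/
def div3 (F : Pt → Vec3) (p : Pt) : ℝ := ∑ i, pd i (fun q => F q i) p

/-- Spatial curl ∇×F of a vector field. -/
def curl3 (F : Pt → Vec3) (p : Pt) : Vec3 :=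
  ![pd 1 (fun q => F q 2) p - pd 2 (fun q => F q 1) p,
    pd 2 (fun q => F q 0) p - pd 0 (fun q => F q 2) p,
    pd 0 (fun q => F q 1) p - pd 1 (fun q => F q 0) p]

/-- Directional derivative (u·∇)f of a scalar field. -/
def dirD (u : Pt → Vec3) (f : Pt → ℝ) (p : Pt) : ℝ := ∑ i, u p i * pd i f p

/-- Directional derivative (u·∇)F of a vector field. -/
def dirDVec (u F : Pt → Vec3) (p : Pt) : Vec3 :=
  fun j => ∑ i, u p i * pd i (fun q => F q j) p

/-- (∇u)ᵀ·A, the vector with i-th component ∑ⱼ (∂uʲ/∂xⁱ) Aⱼ. -/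
def gradTdot (u A : Pt → Vec3) (p : Pt) : Vec3 :=
  fun i => ∑ j, pd i (fun q => u q j) p * A p j

/-- A field is smooth when it is C^∞ jointly in time and space. -/
def SmoothS (f : Pt → ℝ) : Prop := ContDiff ℝ (⊤ : ℕ∞) f

/-- A vector field is smooth when it is C^∞ jointly in time and space. -/
def SmoothV (F : Pt → Vec3) : Prop := ContDiff ℝ (⊤ : ℕ∞) F

/-!
The identity `∇×(u×B) = u(∇·B) − B(∇·u) + (B·∇)u − (u·∇)B` turns Faraday's equation into
`∂B/∂t + (u·∇)B − (B·∇)u = −(∇·u)B`, and continuity reads `∂ρ/∂t + (u·∇)ρ = −ρ(∇·u)`.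
Expanding `b = ρ⁻¹B` by the product rule, the transport of `ρ⁻¹` contributes
`(∂/∂t + u·∇)ρ⁻¹ B = ρ⁻¹(∇·u)B`, which cancels the term `−ρ⁻¹(∇·u)B` coming from `B`.
-/

section Calculus

variable {f g : Pt → ℝ}

lemma Differentiable.differentiableAt_space (hf : Differentiable ℝ f) (p : Pt) :
    DifferentiableAt ℝ (fun x : Vec3 => f (p.1, x)) p.2 :=
  (hf.comp ((differentiable_const _).prodMk differentiable_id)).differentiableAt

lemma Differentiable.differentiableAt_time (hf : Differentiable ℝ f) (p : Pt) :
    DifferentiableAt ℝ (fun t : ℝ => f (t, p.2)) p.1 :=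
  (hf.comp (differentiable_id.prodMk (differentiable_const _))).differentiableAt

lemma pd_sub (hf : Differentiable ℝ f) (hg : Differentiable ℝ g) (i : Fin 3) (p : Pt) :
    pd i (fun q => f q - g q) p = pd i f p - pd i g p := by
  simp [pd, fderiv_fun_sub (hf.differentiableAt_space p) (hg.differentiableAt_space p)]

lemma pd_mul (hf : Differentiable ℝ f) (hg : Differentiable ℝ g) (i : Fin 3) (p : Pt) :
    pd i (fun q => f q * g q) p = pd i f p * g p + f p * pd i g p := by
  simp only [pd, fderiv_fun_mul (hf.differentiableAt_space p) (hg.differentiableAt_space p),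
    Prod.mk.eta, add_apply, smul_apply, smul_eq_mul]
  ring

lemma pd_inv (hf : Differentiable ℝ f) {p : Pt} (hp : f p ≠ 0) (i : Fin 3) :
    pd i (fun q => (f q)⁻¹) p = -(f p ^ 2)⁻¹ * pd i f p := by
  have hinv : HasFDerivAt (fun x : Vec3 => (f (p.1, x))⁻¹)
      ((ContinuousLinearMap.toSpanSingleton ℝ (-(f p ^ 2)⁻¹)).comp
        (fderiv ℝ (fun x : Vec3 => f (p.1, x)) p.2)) p.2 :=
    (hasFDerivAt_inv hp).comp p.2 (hf.differentiableAt_space p).hasFDerivAt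
  simp [pd, hinv.fderiv, mul_comm]

lemma dt_mul (hf : Differentiable ℝ f) (hg : Differentiable ℝ g) (p : Pt) :
    dt (fun q => f q * g q) p = dt f p * g p + f p * dt g p :=
  deriv_fun_mul (hf.differentiableAt_time p) (hg.differentiableAt_time p)

lemma dt_inv (hf : Differentiable ℝ f) {p : Pt} (hp : f p ≠ 0) :
    dt (fun q => (f q)⁻¹) p = -(f p ^ 2)⁻¹ * dt f p := by
  rw [dt, deriv_fun_inv'' (hf.differentiableAt_time p) hp, dt]
  ring

end Calculus

section VectorCalculus

variable {f : Pt → ℝ} {u B F : Pt → Vec3}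

lemma curl3_cross3 (hu : Differentiable ℝ u) (hB : Differentiable ℝ B) (p : Pt) :
    curl3 (fun q => cross3 (u q) (B q)) p
      = div3 B p • u p - div3 u p • B p + dirDVec B u p - dirDVec u B p := by
  have hu' := differentiable_pi.1 hu
  have hB' := differentiable_pi.1 hB
  have hpd_cross : ∀ i a b c d : Fin 3, pd i (fun q => u q a * B q b - u q c * B q d) p
      = (pd i (fun q => u q a) p * B p b + u p a * pd i (fun q => B q b) p)
        - (pd i (fun q => u q c) p * B p d + u p c * pd i (fun q => B q d) p) := by
    intro i a b c d
    rw [pd_sub ((hu' a).fun_mul (hB' b)) ((hu' c).fun_mul (hB' d)), pd_mul (hu' a) (hB' b),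
      pd_mul (hu' c) (hB' d)]
  funext j
  fin_cases j <;>
    simp only [curl3, cross3, div3, dirDVec, Fin.sum_univ_three, Fin.isValue, Fin.zero_eta,
      Fin.mk_one, Fin.reduceFinMk, Matrix.cons_val, Matrix.cons_val_zero, Matrix.cons_val_one,
      Pi.add_apply, Pi.sub_apply, Pi.smul_apply, smul_eq_mul, hpd_cross] <;>
    ring

lemma div3_smul (hf : Differentiable ℝ f) (hF : Differentiable ℝ F) (p : Pt) :
    div3 (fun q => f q • F q) p = dirD F f p + f p * div3 F p := by
  simp only [div3, dirD, Pi.smul_apply, smul_eq_mul, Finset.mul_sum,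
    pd_mul hf (differentiable_pi.1 hF _), ← Finset.sum_add_distrib]
  exact Finset.sum_congr rfl fun i _ => by ring

lemma dtVec_smul (hf : Differentiable ℝ f) (hF : Differentiable ℝ F) (p : Pt) :
    dtVec (fun q => f q • F q) p = dt f p • F p + f p • dtVec F p := by
  funext j
  exact dt_mul hf (differentiable_pi.1 hF j) p

lemma dirDVec_smul_right (hf : Differentiable ℝ f) (hF : Differentiable ℝ F) (p : Pt) :
    dirDVec u (fun q => f q • F q) p = dirD u f p • F p + f p • dirDVec u F p := by
  funext j
  simp only [dirDVec, dirD, Pi.smul_apply, smul_eq_mul, Pi.add_apply,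
    pd_mul hf (differentiable_pi.1 hF j), Finset.sum_mul, Finset.mul_sum,
    ← Finset.sum_add_distrib]
  exact Finset.sum_congr rfl fun i _ => by ring

lemma dirDVec_smul_left (p : Pt) :
    dirDVec (fun q => f q • F q) u p = f p • dirDVec F u p := by
  funext j
  simp only [dirDVec, Pi.smul_apply, smul_eq_mul, Finset.mul_sum, mul_assoc]

lemma dirD_inv (hf : Differentiable ℝ f) {p : Pt} (hp : f p ≠ 0) :
    dirD u (fun q => (f q)⁻¹) p = -(f p ^ 2)⁻¹ * dirD u f p := by
  simp only [dirD, pd_inv hf hp, Finset.mul_sum]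
  exact Finset.sum_congr rfl fun i _ => by ring

end VectorCalculus

/-- Faraday's equation (with the u(∇·B) term) and mass
    continuity imply that b = B/ρ is Lie dragged with the flow. -/
theorem b_field_lie_dragged
    (u B : Pt → Vec3) (ρ : Pt → ℝ)
    (hu : SmoothV u) (hB : SmoothV B) (hρ : SmoothS ρ)
    (hρpos : ∀ p : Pt, 0 < ρ p)
    (hfar : ∀ p : Pt,
      dtVec B p - curl3 (fun q => cross3 (u q) (B q)) p
        + div3 B p • u p = 0)
    (hcont : ∀ p : Pt, dt ρ p + div3 (fun q => ρ q • u q) p = 0) :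
    ∀ p : Pt,
      dtVec (fun q => (ρ q)⁻¹ • B q) p
        + dirDVec u (fun q => (ρ q)⁻¹ • B q) p
        - dirDVec (fun q => (ρ q)⁻¹ • B q) u p = 0 := by
  intro p
  have hu := hu.differentiable (by simp)
  have hB := hB.differentiable (by simp)
  have hρ := hρ.differentiable (by simp)
  have hρp : ρ p ≠ 0 := (hρpos p).ne'
  have hρinv : Differentiable ℝ fun q => (ρ q)⁻¹ := hρ.inv fun q => (hρpos q).ne'
  have faraday : dtVec B p + dirDVec u B p - dirDVec B u p + div3 u p • B p = 0 := by
    rw [← hfar p, curl3_cross3 hu hB]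
    abel
  have continuity : dt ρ p + dirD u ρ p + ρ p * div3 u p = 0 := by
    rw [← hcont p, div3_smul hρ hu]
    ring
  rw [dtVec_smul hρinv hB, dirDVec_smul_right hρinv hB, dirDVec_smul_left, dt_inv hρ hρp,
    dirD_inv hρ hρp]
  linear_combination (norm := module) (ρ p)⁻¹ • faraday - ((ρ p ^ 2)⁻¹ * continuity) • B p
    + ((ρ p)⁻¹ * div3 u p * inv_mul_cancel₀ hρp) • B p
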